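/- If E_i(t,x,x',x'') are the Euler-Lagrange expressions of a smooth Lagrangian L(t,x,x'), then for all i,j: ∂E_i/∂x_j - ∂E_j/∂x_i = (1/2) D_t(∂E_i/∂x'_j - ∂E_j/∂x'_i), where D_t = ∂/∂t + Σ_k x'_k ∂/∂x_k + Σ_k x''_k ∂/∂x'_k. -/

import Mathlib

open Function

variable {n : ℕ}

/-- Partial derivative w.r.t. time of a function of (t, x, x'). -/
noncomputable def pT3 (f : ℝ → (Fin n → ℝ) → (Fin n → ℝ) → ℝ) (t : ℝ) (x v : Fin n → ℝ) : ℝ :=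
  deriv (fun s => f s x v) t

/-- Partial derivative w.r.t. x_i of a function of (t, x, x'). -/
noncomputable def pX3 (f : ℝ → (Fin n → ℝ) → (Fin n → ℝ) → ℝ) (i : Fin n) (t : ℝ)
    (x v : Fin n → ℝ) : ℝ :=
  deriv (fun s => f t (Function.update x i s) v) (x i)

/-- Partial derivative w.r.t. x'_i of a function of (t, x, x'). -/
noncomputable def pV3 (f : ℝ → (Fin n → ℝ) → (Fin n → ℝ) → ℝ) (i : Fin n) (t : ℝ)
    (x v : Fin n → ℝ) : ℝ :=
  deriv (fun s => f t x (Function.update v i s)) (v i)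

/-- Partial derivative w.r.t. time of a function of (t, x, x', x''). -/
noncomputable def pT4 (F : ℝ → (Fin n → ℝ) → (Fin n → ℝ) → (Fin n → ℝ) → ℝ) (t : ℝ)
    (x v a : Fin n → ℝ) : ℝ :=
  deriv (fun s => F s x v a) t

/-- Partial derivative w.r.t. x_i of a function of (t, x, x', x''). -/
noncomputable def pX4 (F : ℝ → (Fin n → ℝ) → (Fin n → ℝ) → (Fin n → ℝ) → ℝ) (i : Fin n) (t : ℝ)
    (x v a : Fin n → ℝ) : ℝ :=
  deriv (fun s => F t (Function.update x i s) v a) (x i)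

/-- Partial derivative w.r.t. x'_i of a function of (t, x, x', x''). -/
noncomputable def pV4 (F : ℝ → (Fin n → ℝ) → (Fin n → ℝ) → (Fin n → ℝ) → ℝ) (i : Fin n) (t : ℝ)
    (x v a : Fin n → ℝ) : ℝ :=
  deriv (fun s => F t x (Function.update v i s) a) (v i)

/-- Partial derivative w.r.t. x''_i of a function of (t, x, x', x''). -/
noncomputable def pA4 (F : ℝ → (Fin n → ℝ) → (Fin n → ℝ) → (Fin n → ℝ) → ℝ) (i : Fin n) (t : ℝ)
    (x v a : Fin n → ℝ) : ℝ :=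
  deriv (fun s => F t x v (Function.update a i s)) (a i)

/-- The Euler–Lagrange expression E_i of a Lagrangian L(t,x,x'), viewed as a function of
(t, x, x', x''):  E_i = ∂²L/∂x'_i∂t + Σ_j (∂²L/∂x'_i∂x_j) x'_j + Σ_j (∂²L/∂x'_i∂x'_j) x''_j
  - ∂L/∂x_i. -/
noncomputable def EulerLagrange (L : ℝ → (Fin n → ℝ) → (Fin n → ℝ) → ℝ) (i : Fin n) (t : ℝ)
    (x v a : Fin n → ℝ) : ℝ :=
  pT3 (pV3 L i) t x v + (∑ j, pX3 (pV3 L i) j t x v * v j)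
    + (∑ j, pV3 (pV3 L i) j t x v * a j) - pX3 L i t x v

/-- The total time derivative D_t = ∂/∂t + Σ_k x'_k ∂/∂x_k + Σ_k x''_k ∂/∂x'_k acting on a
function of (t, x, x', x''). -/
noncomputable def Dt4 (F : ℝ → (Fin n → ℝ) → (Fin n → ℝ) → (Fin n → ℝ) → ℝ) (t : ℝ)
    (x v a : Fin n → ℝ) : ℝ :=
  pT4 F t x v a + (∑ k, v k * pX4 F k t x v a) + (∑ k, a k * pV4 F k t x v a)

/-- The total time derivative including the Σ_k x'''_k ∂/∂x''_k term, with x''' = b a free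
variable. -/
noncomputable def Dt5 (F : ℝ → (Fin n → ℝ) → (Fin n → ℝ) → (Fin n → ℝ) → ℝ) (b : Fin n → ℝ)
    (t : ℝ) (x v a : Fin n → ℝ) : ℝ :=
  Dt4 F t x v a + ∑ k, b k * pA4 F k t x v a

/-!
The Euler–Lagrange expression is `E_i = D_t (∂L/∂x'_i) - ∂L/∂x_i`, where `D_t G` is the
derivative of `G(t, x, x')` along `(1, x', x'')`. The operator `D_t` commutes with `∂/∂x_j`,
while `[∂/∂x'_j, D_t] = ∂/∂x_j` because the direction `(1, x', x'')` itself depends on `x'`.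
With symmetry of mixed partials of the `C⁴` function `L` this gives
`∂E_i/∂x'_j - ∂E_j/∂x'_i = 2 (L_{x'_i x_j} - L_{x'_j x_i})` and
`∂E_i/∂x_j - ∂E_j/∂x_i = D_t (L_{x'_i x_j} - L_{x'_j x_i})`.
-/

section DirDeriv

variable {E F : Type*} [NormedAddCommGroup E] [NormedSpace ℝ E]
  [NormedAddCommGroup F] [NormedSpace ℝ F]

noncomputable def dirDeriv (G : E → F) (w : E) : E → F := fun p => fderiv ℝ G p w

theorem ContDiff.dirDeriv {G : E → F} {m : WithTop ℕ∞} (hG : ContDiff ℝ (m + 1) G) (w : E) :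
    ContDiff ℝ m (dirDeriv G w) :=
  (hG.fderiv_right le_rfl).clm_apply contDiff_const

theorem dirDeriv_dirDeriv {G : E → F} {p : E} (hG : DifferentiableAt ℝ (fderiv ℝ G) p)
    (u w : E) : dirDeriv (dirDeriv G w) u p = fderiv ℝ (fderiv ℝ G) p u w := by
  change fderiv ℝ (fun q => fderiv ℝ G q w) p u = _
  simp [fderiv_clm_apply hG (differentiableAt_const w)]

theorem dirDeriv_comm {G : E → F} (hG : ContDiff ℝ 2 G) (u w : E) :
    dirDeriv (dirDeriv G u) w = dirDeriv (dirDeriv G w) u := by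
  have hG' : Differentiable ℝ (fderiv ℝ G) :=
    (hG.fderiv_right (m := 1) le_rfl).differentiable one_ne_zero
  funext p
  rw [dirDeriv_dirDeriv (hG' p), dirDeriv_dirDeriv (hG' p)]
  exact (hG.contDiffAt.isSymmSndFDerivAt (by simp)).eq w u

end DirDeriv

section Phase

abbrev Phase (n : ℕ) := ℝ × (Fin n → ℝ) × (Fin n → ℝ)

def uncurry3 (f : ℝ → (Fin n → ℝ) → (Fin n → ℝ) → ℝ) : Phase n → ℝ :=
  fun p => f p.1 p.2.1 p.2.2

def eT : Phase n := (1, 0, 0)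

def eX (i : Fin n) : Phase n := (0, Pi.single i 1, 0)

def eV (i : Fin n) : Phase n := (0, 0, Pi.single i 1)

theorem mk_one_eq_basis_sum (v a : Fin n → ℝ) :
    ((1, v, a) : Phase n) = eT + ∑ k, v k • eX k + ∑ k, a k • eV k := by
  ext <;> simp [eT, eX, eV, Prod.fst_sum, Prod.snd_sum, Pi.single_apply]

variable {F : Type*} [NormedAddCommGroup F] [NormedSpace ℝ F] {G : Phase n → F} {t : ℝ}
  {x v : Fin n → ℝ}

theorem hasDerivAt_slice_t (hG : DifferentiableAt ℝ G (t, x, v)) :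
    HasDerivAt (fun s => G (s, x, v)) (dirDeriv G eT (t, x, v)) t :=
  hG.hasFDerivAt.comp_hasDerivAt t ((hasDerivAt_id t).prodMk (hasDerivAt_const t (x, v)))

theorem hasDerivAt_slice_x (hG : DifferentiableAt ℝ G (t, x, v)) (i : Fin n) :
    HasDerivAt (fun s => G (t, Function.update x i s, v)) (dirDeriv G (eX i) (t, x, v))
      (x i) := by
  rw [← Function.update_eq_self i x] at hG
  simpa [dirDeriv, eX, Function.comp_def] using hG.hasFDerivAt.comp_hasDerivAt (x i)
    ((hasDerivAt_const _ t).prodMk ((hasDerivAt_update x i (x i)).prodMk (hasDerivAt_const _ v)))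

theorem hasDerivAt_slice_v (hG : DifferentiableAt ℝ G (t, x, v)) (i : Fin n) :
    HasDerivAt (fun s => G (t, x, Function.update v i s)) (dirDeriv G (eV i) (t, x, v))
      (v i) := by
  rw [← Function.update_eq_self i v] at hG
  simpa [dirDeriv, eV, Function.comp_def] using hG.hasFDerivAt.comp_hasDerivAt (v i)
    ((hasDerivAt_const _ t).prodMk ((hasDerivAt_const _ x).prodMk (hasDerivAt_update v i (v i))))

variable {f : ℝ → (Fin n → ℝ) → (Fin n → ℝ) → ℝ}

theorem pT3_eq_dirDeriv (hf : DifferentiableAt ℝ (uncurry3 f) (t, x, v)) :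
    pT3 f t x v = dirDeriv (uncurry3 f) eT (t, x, v) :=
  (hasDerivAt_slice_t hf).deriv

theorem pX3_eq_dirDeriv (hf : DifferentiableAt ℝ (uncurry3 f) (t, x, v)) (i : Fin n) :
    pX3 f i t x v = dirDeriv (uncurry3 f) (eX i) (t, x, v) :=
  (hasDerivAt_slice_x hf i).deriv

theorem pV3_eq_dirDeriv (hf : DifferentiableAt ℝ (uncurry3 f) (t, x, v)) (i : Fin n) :
    pV3 f i t x v = dirDeriv (uncurry3 f) (eV i) (t, x, v) :=
  (hasDerivAt_slice_v hf i).deriv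

theorem uncurry3_pV3 (hf : Differentiable ℝ (uncurry3 f)) (i : Fin n) :
    uncurry3 (pV3 f i) = dirDeriv (uncurry3 f) (eV i) :=
  funext fun p => pV3_eq_dirDeriv (hf p) i

end Phase

noncomputable def totalDeriv (G : Phase n → ℝ) (t : ℝ) (x v a : Fin n → ℝ) : ℝ :=
  fderiv ℝ G (t, x, v) (1, v, a)

section TotalDeriv

variable {G H : Phase n → ℝ} {t : ℝ} {x v a : Fin n → ℝ}

theorem totalDeriv_eq_sum (G : Phase n → ℝ) (t : ℝ) (x v a : Fin n → ℝ) :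
    totalDeriv G t x v a = dirDeriv G eT (t, x, v) + ∑ k, v k * dirDeriv G (eX k) (t, x, v)
      + ∑ k, a k * dirDeriv G (eV k) (t, x, v) := by
  simp [totalDeriv, dirDeriv, mk_one_eq_basis_sum, map_sum]

theorem totalDeriv_sub (hG : Differentiable ℝ G) (hH : Differentiable ℝ H) :
    totalDeriv (G - H) t x v a = totalDeriv G t x v a - totalDeriv H t x v a := by
  simp [totalDeriv, fderiv_sub (hG _) (hH _)]

theorem hasDerivAt_totalDeriv_x (hG : ContDiff ℝ 2 G) (j : Fin n) :
    HasDerivAt (fun s => totalDeriv G t (Function.update x j s) v a)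
      (totalDeriv (dirDeriv G (eX j)) t x v a) (x j) := by
  have h := hasDerivAt_slice_x (((hG.dirDeriv (m := 1) (1, v, a)).differentiable one_ne_zero)
    (t, x, v)) j
  rwa [dirDeriv_comm hG] at h

theorem hasDerivAt_totalDeriv_v (hG : ContDiff ℝ 2 G) (j : Fin n) :
    HasDerivAt (fun s => totalDeriv G t x (Function.update v j s) a)
      (totalDeriv (dirDeriv G (eV j)) t x v a + dirDeriv G (eX j) (t, x, v)) (v j) := by
  have hG' : Differentiable ℝ (fderiv ℝ G) :=
    (hG.fderiv_right (m := 1) le_rfl).differentiable one_ne_zero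
  have hu : HasDerivAt (fun s => ((1, Function.update v j s, a) : Phase n)) (eX j) (v j) :=
    (hasDerivAt_const _ _).prodMk ((hasDerivAt_update v j (v j)).prodMk (hasDerivAt_const _ _))
  refine ((hasDerivAt_slice_v (hG' (t, x, v)) j).clm_apply hu).congr_deriv ?_
  rw [Function.update_eq_self]
  change fderiv ℝ (fderiv ℝ G) (t, x, v) (eV j) (1, v, a) + _
    = dirDeriv (dirDeriv G (eV j)) (1, v, a) (t, x, v) + _
  rw [dirDeriv_comm hG, dirDeriv_dirDeriv (hG' _)]
  rfl

theorem dt4_lift (hH : Differentiable ℝ H) :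
    Dt4 (fun t x v _ => H (t, x, v)) t x v a = totalDeriv H t x v a := by
  simp only [Dt4, pT4, pX4, pV4, totalDeriv_eq_sum, (hasDerivAt_slice_t (hH _)).deriv,
    (hasDerivAt_slice_x (hH _) _).deriv, (hasDerivAt_slice_v (hH _) _).deriv]

theorem dt4_const_mul (c : ℝ) (F : ℝ → (Fin n → ℝ) → (Fin n → ℝ) → (Fin n → ℝ) → ℝ) :
    Dt4 (fun t x v a => c * F t x v a) t x v a = c * Dt4 F t x v a := by
  simp only [Dt4, pT4, pX4, pV4, deriv_const_mul_field', mul_add, Finset.mul_sum, mul_left_comm c]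

end TotalDeriv

section EulerLagrange

variable {L : ℝ → (Fin n → ℝ) → (Fin n → ℝ) → ℝ}

theorem eulerLagrange_eq (hL : ContDiff ℝ 2 (uncurry3 L)) (i : Fin n) (t : ℝ)
    (x v a : Fin n → ℝ) :
    EulerLagrange L i t x v a
      = totalDeriv (dirDeriv (uncurry3 L) (eV i)) t x v a
        - dirDeriv (uncurry3 L) (eX i) (t, x, v) := by
  have hL' : Differentiable ℝ (uncurry3 L) := hL.differentiable two_ne_zero
  have hP : Differentiable ℝ (uncurry3 (pV3 L i)) := by
    rw [uncurry3_pV3 hL']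
    exact (hL.dirDeriv (m := 1) _).differentiable one_ne_zero
  rw [EulerLagrange, totalDeriv_eq_sum, pT3_eq_dirDeriv (hP _), pX3_eq_dirDeriv (hL' _)]
  simp only [pX3_eq_dirDeriv (hP _), pV3_eq_dirDeriv (hP _), uncurry3_pV3 hL', mul_comm]

section

variable (hL : ContDiff ℝ 3 (uncurry3 L)) (i j : Fin n) (t : ℝ) (x v a : Fin n → ℝ)
include hL

theorem pX4_eulerLagrange :
    pX4 (EulerLagrange L i) j t x v a
      = totalDeriv (dirDeriv (dirDeriv (uncurry3 L) (eV i)) (eX j)) t x v a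
        - dirDeriv (dirDeriv (uncurry3 L) (eX i)) (eX j) (t, x, v) := by
  simp only [pX4, eulerLagrange_eq (hL.of_le (by norm_num))]
  exact ((hasDerivAt_totalDeriv_x (hL.dirDeriv (m := 2) _) j).sub
    (hasDerivAt_slice_x (((hL.dirDeriv (m := 2) _).differentiable two_ne_zero) _) j)).deriv

theorem pV4_eulerLagrange :
    pV4 (EulerLagrange L i) j t x v a
      = totalDeriv (dirDeriv (dirDeriv (uncurry3 L) (eV i)) (eV j)) t x v a
        + dirDeriv (dirDeriv (uncurry3 L) (eV i)) (eX j) (t, x, v)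
        - dirDeriv (dirDeriv (uncurry3 L) (eX i)) (eV j) (t, x, v) := by
  simp only [pV4, eulerLagrange_eq (hL.of_le (by norm_num))]
  exact ((hasDerivAt_totalDeriv_v (hL.dirDeriv (m := 2) _) j).sub
    (hasDerivAt_slice_v (((hL.dirDeriv (m := 2) _).differentiable two_ne_zero) _) j)).deriv

theorem pV4_eulerLagrange_sub :
    pV4 (EulerLagrange L i) j t x v a - pV4 (EulerLagrange L j) i t x v a
      = 2 * (dirDeriv (dirDeriv (uncurry3 L) (eV i)) (eX j) (t, x, v)
        - dirDeriv (dirDeriv (uncurry3 L) (eV j)) (eX i) (t, x, v)) := by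
  have hL2 : ContDiff ℝ 2 (uncurry3 L) := hL.of_le (by norm_num)
  rw [pV4_eulerLagrange hL, pV4_eulerLagrange hL, dirDeriv_comm hL2 (eV j) (eV i),
    dirDeriv_comm hL2 (eX i) (eV j), dirDeriv_comm hL2 (eX j) (eV i)]
  ring

end

theorem dt4_pV4_eulerLagrange_sub (hL : ContDiff ℝ 4 (uncurry3 L)) (i j : Fin n) (t : ℝ)
    (x v a : Fin n → ℝ) :
    Dt4 (fun t x v a =>
        pV4 (EulerLagrange L i) j t x v a - pV4 (EulerLagrange L j) i t x v a) t x v a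
      = 2 * (totalDeriv (dirDeriv (dirDeriv (uncurry3 L) (eV i)) (eX j)) t x v a
        - totalDeriv (dirDeriv (dirDeriv (uncurry3 L) (eV j)) (eX i)) t x v a) := by
  have hD : ∀ u w : Phase n, Differentiable ℝ (dirDeriv (dirDeriv (uncurry3 L) u) w) :=
    fun u w => ((hL.dirDeriv (m := 3) u).dirDeriv (m := 2) w).differentiable two_ne_zero
  have hV : (fun t x v a =>
      pV4 (EulerLagrange L i) j t x v a - pV4 (EulerLagrange L j) i t x v a)
      = fun t x v _ => 2 * (dirDeriv (dirDeriv (uncurry3 L) (eV i)) (eX j)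
          - dirDeriv (dirDeriv (uncurry3 L) (eV j)) (eX i)) (t, x, v) := by
    funext t x v a
    exact pV4_eulerLagrange_sub (hL.of_le (by norm_num)) i j t x v a
  rw [hV, dt4_const_mul, dt4_lift ((hD _ _).sub (hD _ _)), totalDeriv_sub (hD _ _) (hD _ _)]

end EulerLagrange

/-- H2 is necessary: the Euler–Lagrange expressions of a C⁴ Lagrangian satisfy
∂E_i/∂x_j - ∂E_j/∂x_i = (1/2) D_t(∂E_i/∂x'_j - ∂E_j/∂x'_i). -/
theorem helmholtz_H2_necessary (n : ℕ) (L : ℝ → (Fin n → ℝ) → (Fin n → ℝ) → ℝ)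
    (hL : ContDiff ℝ 4 (fun p : ℝ × (Fin n → ℝ) × (Fin n → ℝ) => L p.1 p.2.1 p.2.2)) :
    ∀ (i j : Fin n) (t : ℝ) (x v a : Fin n → ℝ),
      pX4 (EulerLagrange L i) j t x v a - pX4 (EulerLagrange L j) i t x v a
        = (1 / 2) * Dt4 (fun t x v a =>
            pV4 (EulerLagrange L i) j t x v a - pV4 (EulerLagrange L j) i t x v a) t x v a := by
  intro i j t x v a
  have hL4 : ContDiff ℝ 4 (uncurry3 L) := hL
  have hL3 : ContDiff ℝ 3 (uncurry3 L) := hL4.of_le (by norm_num)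
  rw [dt4_pV4_eulerLagrange_sub hL4, pX4_eulerLagrange hL3, pX4_eulerLagrange hL3,
    dirDeriv_comm (hL4.of_le (by norm_num)) (eX i) (eX j)]
  ring
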